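/- For a non-catastrophic encoder, for every S ∈ {I,Z}^{⊗(n-k)} and every non-identity k-qubit logical Pauli L, the memory output g_{S,L} of the transition E(I^{⊗m} ⊗ S ⊗ L) = h_{S,L} ⊗ g_{S,L} belongs to the finite-memory subgroup F₀. -/

import Mathlib

open scoped BigOperators

/-- The Pauli group on `j` qubits modulo its center, written additively:
an element `(a, b)` at each qubit corresponds to `X^a Z^b`. -/
abbrev Pauli (j : ℕ) := Fin j → (ZMod 2) × (ZMod 2)

/-- The standard symplectic form: two Pauli elements commute iff it vanishes. -/
def omega {j : ℕ} (v w : Pauli j) : ZMod 2 :=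
  ∑ i, ((v i).1 * (w i).2 + (w i).1 * (v i).2)

/-- A quantum convolutional encoder: a symplectic automorphism taking
(memory `m`, ancilla `s = n - k`, information `k`) to (physical `n`, memory `m`). -/
structure Encoder (m s k n : ℕ) where
  toEquiv : (Pauli m × Pauli s × Pauli k) ≃+ (Pauli n × Pauli m)
  symp : ∀ x y : Pauli m × Pauli s × Pauli k,
    omega (toEquiv x).1 (toEquiv y).1 + omega (toEquiv x).2 (toEquiv y).2
      = omega x.1 y.1 + omega x.2.1 y.2.1 + omega x.2.2 y.2.2

/-- `S ∈ {I, Z}^{⊗ s}`: the X-component vanishes. -/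
def isIZ {s : ℕ} (S : Pauli s) : Prop := ∀ i, (S i).1 = 0

/-- Pauli `Z` on the `i`-th qubit, identity elsewhere. -/
def Zi {s : ℕ} (i : Fin s) : Pauli s := fun j => (0, if j = i then 1 else 0)

/-- Pauli `X` on the `i`-th qubit, identity elsewhere. -/
def Xi {k : ℕ} (i : Fin k) : Pauli k := fun j => (if j = i then 1 else 0, 0)

/-- A standard path: at each step the ancilla input is in `{I,Z}^{⊗s}` and the
logical input is the identity. -/
def stdPath {m s k n : ℕ} (E : Encoder m s k n) (f : ℕ → Pauli m) : Prop :=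
  ∀ t, ∃ (S : Pauli s) (P : Pauli n), isIZ S ∧ E.toEquiv (f t, S, 0) = (P, f (t + 1))

/-- A finite-memory state: some standard path from it reaches the identity memory state. -/
def finiteMemory {m s k n : ℕ} (E : Encoder m s k n) (M : Pauli m) : Prop :=
  ∃ f : ℕ → Pauli m, stdPath E f ∧ f 0 = M ∧ ∃ t, f t = 0

/-- Membership in a zero physical-weight cycle. -/
def inZeroCycle {m s k n : ℕ} (E : Encoder m s k n) (M : Pauli m) : Prop :=
  ∃ (p : ℕ) (f : ℕ → Pauli m), 0 < p ∧ f 0 = M ∧ (∀ t, f (t + p) = f t) ∧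
    ∀ t, ∃ (S : Pauli s) (L : Pauli k), isIZ S ∧ E.toEquiv (f t, S, L) = (0, f (t + 1))

/-- Non-catastrophic: every edge of every zero physical-weight cycle has
identity logical label. -/
def nonCatastrophic {m s k n : ℕ} (E : Encoder m s k n) : Prop :=
  ∀ (p : ℕ) (f : ℕ → Pauli m) (S : ℕ → Pauli s) (L : ℕ → Pauli k),
    0 < p → (∀ t, f (t + p) = f t) →
    (∀ t, isIZ (S t) ∧ E.toEquiv (f t, S t, L t) = (0, f (t + 1))) →
    ∀ t, L t = 0


/-!
Over `ZMod 2` the finite-memory states form a subspace `F₀`, and by symplecticity of `E` the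
zero-physical-output steps are exactly the symplectic complement of the standard steps (in the
doubled memory space). Duality then gives every state of `F₀^⊥` a zero-output successor in
`F₀^⊥`; as `E` is injective, the predecessor of such a step is determined, so the successor map
permutes the finite set `F₀^⊥` and every state of `F₀^⊥` lies on a zero physical-weight cycle.
Pairing the input `(0, S, L)` with the last edge of such a cycle, whose logical label vanishes by
non-catastrophicity, shows `g ⊥ F₀^⊥`, i.e. `g ∈ F₀^⊥⊥ = F₀`.
-/

open LinearMap (BilinForm)

namespace LinearMap.BilinForm

variable {R M M₁ M₂ : Type*} [CommSemiring R] [AddCommMonoid M] [Module R M]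
  [AddCommMonoid M₁] [Module R M₁] [AddCommMonoid M₂] [Module R M₂]

theorem orthogonal_sup (B : BilinForm R M) (N N' : Submodule R M) :
    B.orthogonal (N ⊔ N') = B.orthogonal N ⊓ B.orthogonal N' := by
  refine le_antisymm (le_inf (orthogonal_le le_sup_left) (orthogonal_le le_sup_right)) ?_
  rintro x ⟨hN, hN'⟩ y hy
  obtain ⟨a, ha, b, hb, rfl⟩ := Submodule.mem_sup.1 hy
  simp [map_add, hN a ha, hN' b hb]

def prod (B₁ : BilinForm R M₁) (B₂ : BilinForm R M₂) : BilinForm R (M₁ × M₂) :=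
  B₁.compl₁₂ (fst R M₁ M₂) (fst R M₁ M₂) + B₂.compl₁₂ (snd R M₁ M₂) (snd R M₁ M₂)

variable {B₁ : BilinForm R M₁} {B₂ : BilinForm R M₂}

@[simp]
theorem prod_apply (x y : M₁ × M₂) : B₁.prod B₂ x y = B₁ x.1 y.1 + B₂ x.2 y.2 := rfl

theorem IsSymm.prod (h₁ : B₁.IsSymm) (h₂ : B₂.IsSymm) : (B₁.prod B₂).IsSymm :=
  ⟨fun x y => by simp [h₁.eq x.1, h₂.eq x.2]⟩

theorem Nondegenerate.prod (h₁ : B₁.Nondegenerate) (h₂ : B₂.Nondegenerate) :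
    (B₁.prod B₂).Nondegenerate := by
  refine ⟨fun x hx => Prod.ext ?_ ?_, fun y hy => Prod.ext ?_ ?_⟩
  · exact h₁.1 _ fun y => by simpa using hx (y, 0)
  · exact h₂.1 _ fun y => by simpa using hx (0, y)
  · exact h₁.2 _ fun x => by simpa using hy (x, 0)
  · exact h₂.2 _ fun x => by simpa using hy (0, x)

theorem orthogonal_prod (N₁ : Submodule R M₁) (N₂ : Submodule R M₂) :
    (B₁.prod B₂).orthogonal (N₁.prod N₂) = (B₁.orthogonal N₁).prod (B₂.orthogonal N₂) := by
  ext x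
  simp only [mem_orthogonal_iff, Submodule.mem_prod, prod_apply, Prod.forall]
  refine ⟨fun h => ⟨fun a ha => ?_, fun b hb => ?_⟩, fun h a b ⟨ha, hb⟩ => ?_⟩
  · simpa using h a 0 ⟨ha, N₂.zero_mem⟩
  · simpa using h 0 b ⟨N₁.zero_mem, hb⟩
  · rw [h.1 a ha, h.2 b hb, add_zero]

theorem mem_orthogonal_map_fst_iff (Y : Submodule R (M₁ × M₂)) (x : M₁) :
    x ∈ B₁.orthogonal (Y.map (fst R M₁ M₂)) ↔ (x, 0) ∈ (B₁.prod B₂).orthogonal Y := by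
  simp [mem_orthogonal_iff]

end LinearMap.BilinForm

open LinearMap.BilinForm

theorem omega_comm {j : ℕ} (v w : Pauli j) : omega v w = omega w v :=
  Finset.sum_congr rfl fun _ _ => add_comm _ _

def omegaForm (j : ℕ) : BilinForm (ZMod 2) (Pauli j) := by
  refine LinearMap.mk₂ (ZMod 2) omega ?_ ?_ ?_ ?_ <;> intros <;>
    simp only [omega, smul_eq_mul, Finset.mul_sum, ← Finset.sum_add_distrib] <;>
    exact Finset.sum_congr rfl fun _ _ => by simp; ring

@[simp]
theorem omegaForm_apply {j : ℕ} (v w : Pauli j) : omegaForm j v w = omega v w := rfl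

@[simp]
theorem omega_zero_left {j : ℕ} (w : Pauli j) : omega 0 w = 0 := by simp [omega]

@[simp]
theorem omega_zero_right {j : ℕ} (v : Pauli j) : omega v 0 = 0 := by simp [omega]

theorem omegaForm_isSymm (j : ℕ) : (omegaForm j).IsSymm :=
  ⟨fun v w => omega_comm v w⟩

theorem omega_Zi {j : ℕ} (v : Pauli j) (i : Fin j) : omega v (Zi i) = (v i).1 := by
  simp [omega, Zi]

theorem omega_Xi {j : ℕ} (v : Pauli j) (i : Fin j) : omega v (Xi i) = (v i).2 := by
  simp [omega, Xi]

theorem omegaForm_nondegenerate (j : ℕ) : (omegaForm j).Nondegenerate := by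
  have separating (v : Pauli j) (hv : ∀ w, omega v w = 0) : v = 0 :=
    funext fun i => Prod.ext ((omega_Zi v i).symm.trans (hv _)) ((omega_Xi v i).symm.trans (hv _))
  exact ⟨separating, fun v hv => separating v fun w => (omega_comm v w).trans (hv w)⟩

theorem isIZ_zero {j : ℕ} : isIZ (0 : Pauli j) := fun _ => rfl

theorem isIZ.add {j : ℕ} {S S' : Pauli j} (hS : isIZ S) (hS' : isIZ S') : isIZ (S + S') :=
  fun i => by simp [hS i, hS' i]

theorem isIZ_Zi {j : ℕ} (i : Fin j) : isIZ (Zi i) := fun _ => rfl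

theorem omega_eq_zero_of_isIZ {j : ℕ} {S S' : Pauli j} (hS : isIZ S) (hS' : isIZ S') :
    omega S S' = 0 := by
  simp [omega, hS _, hS' _]

namespace Encoder

variable {m s k n : ℕ} (E : Encoder m s k n)

def stdSteps : Submodule (ZMod 2) (Pauli m × Pauli m) :=
  AddSubgroup.toZModSubmodule 2
    { carrier := {x | ∃ S P, isIZ S ∧ E.toEquiv (x.1, S, 0) = (P, x.2)}
      zero_mem' := ⟨0, 0, isIZ_zero, E.toEquiv.map_zero⟩
      add_mem' := by
        rintro x y ⟨S, P, hS, hx⟩ ⟨S', P', hS', hy⟩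
        refine ⟨S + S', P + P', hS.add hS', ?_⟩
        simpa only [Prod.mk_add_mk, Prod.fst_add, Prod.snd_add, add_zero, hx, hy]
          using E.toEquiv.map_add (x.1, S, 0) (y.1, S', 0)
      neg_mem' := by
        intro x hx
        rwa [ZModModule.neg_eq_self] }

def zeroSteps : Submodule (ZMod 2) (Pauli m × Pauli m) :=
  AddSubgroup.toZModSubmodule 2
    { carrier := {x | ∃ S L, isIZ S ∧ E.toEquiv (x.1, S, L) = (0, x.2)}
      zero_mem' := ⟨0, 0, isIZ_zero, E.toEquiv.map_zero⟩
      add_mem' := by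
        rintro x y ⟨S, L, hS, hx⟩ ⟨S', L', hS', hy⟩
        refine ⟨S + S', L + L', hS.add hS', ?_⟩
        simpa only [Prod.mk_add_mk, Prod.fst_add, Prod.snd_add, add_zero, hx, hy]
          using E.toEquiv.map_add (x.1, S, L) (y.1, S', L')
      neg_mem' := by
        intro x hx
        rwa [ZModModule.neg_eq_self] }

theorem stdPath_iff {f : ℕ → Pauli m} : stdPath E f ↔ ∀ t, (f t, f (t + 1)) ∈ E.stdSteps :=
  Iff.rfl

theorem finiteMemory_iff_eventually_eq_zero {M : Pauli m} :
    finiteMemory E M ↔ ∃ f, stdPath E f ∧ f 0 = M ∧ ∀ᶠ t in Filter.atTop, f t = 0 := by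
  refine ⟨fun ⟨f, hf, hf0, t, ht⟩ => ?_, fun ⟨f, hf, hf0, hz⟩ => ⟨f, hf, hf0, hz.exists⟩⟩
  rw [stdPath_iff] at hf
  refine ⟨fun u => if t ≤ u then 0 else f u, (stdPath_iff E).2 fun u => ?_, ?_,
    Filter.eventually_atTop.2 ⟨t, fun u hu => if_pos hu⟩⟩
  rcases lt_trichotomy (u + 1) t with hu | hu | hu
  · simpa only [if_neg (show ¬t ≤ u by omega), if_neg (show ¬t ≤ u + 1 by omega)] using hf u
  · subst hu
    simpa [ht] using hf u
  · simpa only [if_pos (show t ≤ u by omega), if_pos (show t ≤ u + 1 by omega),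
      Prod.mk_zero_zero] using E.stdSteps.zero_mem
  rcases Nat.eq_zero_or_pos t with rfl | ht0
  · simp [← hf0, ht]
  · simp [Nat.not_le.2 ht0, hf0]

def finiteMemoryStates : Submodule (ZMod 2) (Pauli m) :=
  AddSubgroup.toZModSubmodule 2
    { carrier := {M | finiteMemory E M}
      zero_mem' := ⟨fun _ => 0, (stdPath_iff E).2 fun _ => E.stdSteps.zero_mem, rfl, 0, rfl⟩
      add_mem' := by
        intro M N hM hN
        obtain ⟨f, hf, rfl, hf0⟩ := (finiteMemory_iff_eventually_eq_zero E).1 hM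
        obtain ⟨g, hg, rfl, hg0⟩ := (finiteMemory_iff_eventually_eq_zero E).1 hN
        refine (finiteMemory_iff_eventually_eq_zero E).2
          ⟨f + g, (stdPath_iff E).2 fun t => ?_, rfl, (hf0.and hg0).mono fun t ht => by simp [ht]⟩
        exact E.stdSteps.add_mem ((stdPath_iff E).1 hf t) ((stdPath_iff E).1 hg t)
      neg_mem' := by
        intro M hM
        rwa [ZModModule.neg_eq_self] }

theorem finiteMemory_of_mem_stdSteps {M M' : Pauli m} (hstep : (M, M') ∈ E.stdSteps)
    (hM' : finiteMemory E M') : finiteMemory E M := by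
  obtain ⟨f, hf, rfl, t, ht⟩ := hM'
  refine ⟨fun | 0 => M | u + 1 => f u, fun | 0 => hstep | u + 1 => hf u, rfl, t + 1, ht⟩

theorem zeroSteps_eq_orthogonal_stdSteps :
    E.zeroSteps = ((omegaForm m).prod (omegaForm m)).orthogonal E.stdSteps := by
  refine le_antisymm ?_ fun ⟨M, M'⟩ hx => ?_
  · rintro ⟨M, M'⟩ ⟨S, L, hS, hx⟩ ⟨N, N'⟩ ⟨S', P, hS', hy⟩
    have hsymp := E.symp (N, S', 0) (M, S, L)
    simp only [hx, hy, omega_zero_left, omega_zero_right, omega_eq_zero_of_isIZ hS' hS,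
      add_zero, zero_add] at hsymp
    simp [hsymp, CharTwo.add_self_eq_zero]
  · set w := E.toEquiv.symm (0, M')
    have hw : E.toEquiv w = (0, M') := E.toEquiv.apply_symm_apply _
    have key (N : Pauli m) (S : Pauli s) (hS : isIZ S) :
        omega M N = omega w.1 N + omega w.2.1 S := by
      have horth := hx (N, (E.toEquiv (N, S, 0)).2) ⟨S, _, hS, rfl⟩
      have hsymp := E.symp w (N, S, 0)
      simp only [hw, omega_zero_left, omega_zero_right, add_zero, zero_add] at hsymp
      simp only [prod_apply, omegaForm_apply] at horth
      rw [← hsymp, omega_comm M, omega_comm M']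
      exact eq_of_sub_eq_zero (by rwa [ZModModule.sub_eq_add])
    have hw₁ : w.1 = M := by
      refine (sub_eq_zero.1 ((omegaForm_nondegenerate m).1 _ fun N => ?_)).symm
      simp [key N 0 isIZ_zero]
    have hw₂ : isIZ w.2.1 := fun i => by
      simpa [omega_Zi] using (key 0 (Zi i) (isIZ_Zi i)).symm
    exact ⟨w.2.1, w.2.2, hw₂, by rw [← hw₁]; exact hw⟩

theorem fst_eq_of_mem_zeroSteps {M M' : Pauli m} (h : (M, M') ∈ E.zeroSteps) :
    M = (E.toEquiv.symm (0, M')).1 := by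
  obtain ⟨S, L, -, h⟩ := h
  rw [← h, AddEquiv.symm_apply_apply]

theorem exists_zeroStep_of_mem_orthogonal {M : Pauli m}
    (hM : M ∈ (omegaForm m).orthogonal E.finiteMemoryStates) :
    ∃ M' ∈ (omegaForm m).orthogonal E.finiteMemoryStates, (M, M') ∈ E.zeroSteps := by
  have hnd := omegaForm_nondegenerate m
  have hsymm := omegaForm_isSymm m
  set F := E.finiteMemoryStates
  -- the zero-output steps that land in `F^⊥`; we show that their sources exhaust `F^⊥`
  set Y := E.zeroSteps ⊓ (⊤ : Submodule (ZMod 2) (Pauli m)).prod ((omegaForm m).orthogonal F)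
    with hYdef
  have hY : ((omegaForm m).prod (omegaForm m)).orthogonal Y =
      E.stdSteps ⊔ (⊥ : Submodule (ZMod 2) (Pauli m)).prod F := by
    rw [hYdef, zeroSteps_eq_orthogonal_stdSteps, ← orthogonal_bot (B := omegaForm m),
      ← orthogonal_prod, ← orthogonal_sup,
      orthogonal_orthogonal (hnd.prod hnd) (hsymm.prod hsymm).isRefl]
  have hD : (omegaForm m).orthogonal (Y.map (LinearMap.fst _ _ _)) ≤ F := fun N hN => by
    rw [mem_orthogonal_map_fst_iff (B₂ := omegaForm m), hY, Submodule.mem_sup] at hN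
    obtain ⟨x, hx, z, ⟨hz₁, hz₂⟩, hsum⟩ := hN
    have hx_eq : x = (N, z.2) := by
      rw [eq_sub_of_add_eq hsum, ZModModule.sub_eq_add]
      exact Prod.ext (by simpa using hz₁) (by simp)
    exact E.finiteMemory_of_mem_stdSteps (hx_eq ▸ hx) hz₂
  obtain ⟨⟨_, M'⟩, ⟨hstep, -, hM'⟩, rfl⟩ :=
    (orthogonal_orthogonal hnd hsymm.isRefl _ ▸ orthogonal_le hD) hM
  exact ⟨M', hM', hstep⟩

theorem inZeroCycle_of_mem_orthogonal {M : Pauli m}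
    (hM : M ∈ (omegaForm m).orthogonal E.finiteMemoryStates) : inZeroCycle E M := by
  set P := (omegaForm m).orthogonal E.finiteMemoryStates
  choose next hnext_mem hnext using fun v : P => E.exists_zeroStep_of_mem_orthogonal v.2
  let σ (v : P) : P := ⟨next v, hnext_mem v⟩
  have hσ : Function.Injective σ := fun v w hvw => Subtype.ext <| by
    rw [E.fst_eq_of_mem_zeroSteps (hnext v), E.fst_eq_of_mem_zeroSteps (hnext w)]
    exact congrArg (fun u => (E.toEquiv.symm (0, u.1)).1) hvw
  obtain ⟨p, hp, hper⟩ := Function.mem_periodicPts.1 (hσ.mem_periodicPts ⟨M, hM⟩)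
  have hedge (t : ℕ) :
      ((σ^[t] ⟨M, hM⟩ : Pauli m), (σ^[t + 1] ⟨M, hM⟩ : Pauli m)) ∈ E.zeroSteps := by
    rw [Function.iterate_succ_apply']
    exact hnext _
  refine ⟨p, fun t => (σ^[t] ⟨M, hM⟩ : Pauli m), hp, rfl, fun t => ?_, hedge⟩
  simp only [Function.iterate_add_apply, hper.eq]

theorem omega_eq_zero_of_inZeroCycle (hE : nonCatastrophic E) {S : Pauli s} {L : Pauli k}
    {h : Pauli n} {g : Pauli m} (hS : isIZ S) (hout : E.toEquiv (0, S, L) = (h, g))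
    {M : Pauli m} (hM : inZeroCycle E M) : omega g M = 0 := by
  obtain ⟨p, f, hp, rfl, hper, hedges⟩ := hM
  choose S' L' hS' hstep using hedges
  obtain ⟨q, rfl⟩ := Nat.exists_eq_add_one_of_ne_zero hp.ne'
  have hL' := hE (q + 1) f S' L' hp hper fun t => ⟨hS' t, hstep t⟩
  have hsymp := E.symp (0, S, L) (f q, S' q, L' q)
  rw [hout, hstep q, hL' q] at hsymp
  simpa [omega_eq_zero_of_isIZ hS (hS' q), ← hper 0] using hsymp

end Encoder

theorem noncatastrophic_logical_outputs_finite_memory_general {m s k n : ℕ}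
    (E : Encoder m s k n) (hE : nonCatastrophic E)
    (S : Pauli s) (L : Pauli k) (hS : isIZ S)
    (h : Pauli n) (g : Pauli m)
    (hout : E.toEquiv (0, S, L) = (h, g)) :
    finiteMemory E g := by
  have hg : g ∈ (omegaForm m).orthogonal ((omegaForm m).orthogonal E.finiteMemoryStates) :=
    fun N hN => (omega_comm N g).trans <|
      E.omega_eq_zero_of_inZeroCycle hE hS hout (E.inZeroCycle_of_mem_orthogonal hN)
  rwa [orthogonal_orthogonal (omegaForm_nondegenerate m) (omegaForm_isSymm m).isRefl] at hg

theorem noncatastrophic_logical_outputs_finite_memory {m s k n : ℕ}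
    (E : Encoder m s k n) (hE : nonCatastrophic E)
    (S : Pauli s) (L : Pauli k) (hS : isIZ S) (hL : L ≠ 0)
    (h : Pauli n) (g : Pauli m)
    (hout : E.toEquiv (0, S, L) = (h, g)) :
    finiteMemory E g :=
  noncatastrophic_logical_outputs_finite_memory_general E hE S L hS h g hout
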